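/- Let G = (V,E;w) be a finite simple undirected graph with positive integer vertex weights and no isolated vertices, and let α* be its minimal α-ratio. If 0 < ε ≤ 1/w(V)³, then every nonempty set B̂ ⊆ V that minimizes cap(B,ε) over all nonempty B ⊆ V is the maximal bottleneck of G. -/

import Mathlib

/-!
Write `cap(B,ε) = α*·w(V) + σ(B) + (n − |B|)·ε` with the surplus `σ(B) = w(Γ(B)) − α*·w(B)`.
Minimality of `α*` makes `σ ≥ 0`, with equality exactly on bottlenecks. With integer weights
`α* = p/q` for some `q ≤ w(V)`, so a positive surplus is at least `1/w(V)`, which beats the whole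
ε-term `(n − 1)·ε < 1/w(V)²`: a minimizer of `cap` is therefore a bottleneck. Among bottlenecks
`cap` strictly decreases as the set grows, so no bottleneck strictly contains the minimizer.
-/

open Finset

/-- The total weight of a finite set of vertices. -/
def wsum {V : Type*} (w : V → ℝ) (S : Finset V) : ℝ := ∑ v ∈ S, w v

/-- The neighborhood `Γ(S)` of a set `S` of vertices: all vertices adjacent to at least one
vertex of `S`. -/
def nbhd {V : Type*} [Fintype V] [DecidableEq V] (G : SimpleGraph V) [DecidableRel G.Adj]
    (S : Finset V) : Finset V :=
  univ.filter fun v => ∃ u ∈ S, G.Adj u v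

/-- The α-ratio `α(S) = w(Γ(S)) / w(S)` of a set `S`. -/
noncomputable def alphaR {V : Type*} [Fintype V] [DecidableEq V] (G : SimpleGraph V)
    [DecidableRel G.Adj] (w : V → ℝ) (S : Finset V) : ℝ :=
  wsum w (nbhd G S) / wsum w S

/-- `B` is a maximal bottleneck: it is nonempty, its α-ratio is minimal among all nonempty
subsets (i.e. `α(B) = α*`), and every strictly larger subset has strictly larger α-ratio. -/
def IsMaxBottleneck {V : Type*} [Fintype V] [DecidableEq V] (G : SimpleGraph V)
    [DecidableRel G.Adj] (w : V → ℝ) (B : Finset V) : Prop :=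
  B.Nonempty ∧ (∀ S : Finset V, S.Nonempty → alphaR G w B ≤ alphaR G w S) ∧
    ∀ B' : Finset V, B ⊂ B' → alphaR G w B < alphaR G w B'

/-- The capacity `cap(B,ε) = α*·(w(V) − w(B)) + w(Γ(B)) + (n − |B|)·ε` of the cut with
source side `{s} ∪ B ∪ {ũ : u ∈ Γ(B)}` in the network `N(G,α*,ε)`, where `n = |V|`. -/
noncomputable def capEps {V : Type*} [Fintype V] [DecidableEq V] (G : SimpleGraph V)
    [DecidableRel G.Adj] (w : V → ℝ) (astar eps : ℝ) (B : Finset V) : ℝ :=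
  astar * (wsum w univ - wsum w B) + wsum w (nbhd G B) +
    ((Fintype.card V : ℝ) - B.card) * eps

section

variable {V : Type*}

lemma wsum_pos {w : V → ℝ} (hw : ∀ v, 0 < w v) {S : Finset V} (hS : S.Nonempty) :
    0 < wsum w S :=
  sum_pos (fun v _ => hw v) hS

lemma card_le_wsum {w : V → ℝ} (hw : ∀ v, 1 ≤ w v) (S : Finset V) :
    (S.card : ℝ) ≤ wsum w S := by
  simpa [wsum] using card_nsmul_le_sum S w 1 fun v _ => hw v

lemma wsum_natCast (w : V → ℕ) (S : Finset V) :
    wsum (fun v => (w v : ℝ)) S = ((∑ v ∈ S, w v : ℕ) : ℝ) := by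
  simp [wsum]

lemma wsum_le_wsum_univ [Fintype V] {w : V → ℝ} (hw : ∀ v, 0 ≤ w v) (S : Finset V) :
    wsum w S ≤ wsum w univ :=
  sum_le_sum_of_subset_of_nonneg (subset_univ S) fun v _ _ => hw v

variable [Fintype V] [DecidableEq V] (G : SimpleGraph V) [DecidableRel G.Adj]

def surplus (w : V → ℝ) (a : ℝ) (B : Finset V) : ℝ :=
  wsum w (nbhd G B) - a * wsum w B

lemma capEps_eq_add_surplus (w : V → ℝ) (a eps : ℝ) (B : Finset V) :
    capEps G w a eps B =
      a * wsum w univ + surplus G w a B + ((Fintype.card V : ℝ) - B.card) * eps := by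
  unfold capEps surplus
  ring

variable {G}

lemma surplus_nonneg_iff {w : V → ℝ} {a : ℝ} {S : Finset V} (hS : 0 < wsum w S) :
    0 ≤ surplus G w a S ↔ a ≤ alphaR G w S := by
  rw [surplus, alphaR, le_div_iff₀ hS, sub_nonneg]

lemma surplus_eq_zero_iff {w : V → ℝ} {a : ℝ} {S : Finset V} (hS : 0 < wsum w S) :
    surplus G w a S = 0 ↔ alphaR G w S = a := by
  rw [surplus, alphaR, div_eq_iff hS.ne', sub_eq_zero, eq_comm]

lemma one_div_le_sub_div_mul_of_pos {p q b g : ℕ} (hq : 0 < q)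
    (h : 0 < (g : ℝ) - p / q * b) : 1 / (q : ℝ) ≤ g - p / q * b := by
  have hq' : (0 : ℝ) < q := Nat.cast_pos.2 hq
  have hk : (g : ℝ) - p / q * b = ((g * q - p * b : ℤ) : ℝ) / q := by
    push_cast
    field_simp
  rw [hk] at h ⊢
  rw [div_pos_iff_of_pos_right hq'] at h
  gcongr
  exact_mod_cast Int.cast_pos.1 h

lemma one_div_wsum_univ_le_surplus {w : V → ℕ} (hw : ∀ v, 0 < w v) {S₀ B : Finset V}
    (hS₀ : S₀.Nonempty)
    (hB : 0 < surplus G (fun v => (w v : ℝ)) (alphaR G (fun v => (w v : ℝ)) S₀) B) :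
    1 / wsum (fun v => (w v : ℝ)) univ ≤
      surplus G (fun v => (w v : ℝ)) (alphaR G (fun v => (w v : ℝ)) S₀) B := by
  have hq : 0 < wsum (fun v => (w v : ℝ)) S₀ := wsum_pos (fun v => Nat.cast_pos.2 (hw v)) hS₀
  have hqW := wsum_le_wsum_univ (fun v => Nat.cast_nonneg (w v)) S₀
  refine (one_div_le_one_div_of_le hq hqW).trans ?_
  simp only [surplus, alphaR, wsum_natCast] at hB hq ⊢
  exact one_div_le_sub_div_mul_of_pos (Nat.cast_pos.1 hq) hB

lemma sub_one_mul_lt_one_div {n W eps : ℝ} (hW : 1 ≤ W) (hnW : n ≤ W) (heps : 0 < eps)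
    (heps' : eps ≤ 1 / W ^ 3) : (n - 1) * eps < 1 / W := by
  have hW0 : 0 < W := by linarith
  calc (n - 1) * eps < W * eps := by nlinarith
    _ ≤ W * (1 / W ^ 3) := by gcongr
    _ = 1 / W / W := by field_simp
    _ ≤ 1 / W := div_le_self (by positivity) hW

lemma capEps_lt_of_surplus_eq_zero_of_le_surplus {w : V → ℝ} {a eps δ : ℝ} {S₀ B : Finset V}
    (hS₀ : S₀.Nonempty) (h₀ : surplus G w a S₀ = 0) (hB : δ ≤ surplus G w a B)
    (heps : 0 ≤ eps) (hδ : ((Fintype.card V : ℝ) - 1) * eps < δ) :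
    capEps G w a eps S₀ < capEps G w a eps B := by
  have hS₀card : (1 : ℝ) ≤ S₀.card := by exact_mod_cast hS₀.card_pos
  have hBcard : (B.card : ℝ) ≤ Fintype.card V := by exact_mod_cast card_le_univ B
  rw [capEps_eq_add_surplus, capEps_eq_add_surplus, h₀]
  nlinarith

lemma capEps_lt_of_ssubset {w : V → ℝ} {a eps : ℝ} (heps : 0 < eps) {B B' : Finset V}
    (hB : surplus G w a B = 0) (hB' : surplus G w a B' = 0) (hsub : B ⊂ B') :
    capEps G w a eps B' < capEps G w a eps B := by
  have hcard : (B.card : ℝ) < B'.card := by exact_mod_cast card_lt_card hsub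
  rw [capEps_eq_add_surplus, capEps_eq_add_surplus, hB, hB']
  nlinarith

end

theorem small_eps_min_capEps_is_maximal_bottleneck_general {V : Type*} [Fintype V] [DecidableEq V]
    (G : SimpleGraph V) [DecidableRel G.Adj] (w : V → ℕ)
    (hw : ∀ v, 0 < w v)
    (astar : ℝ)
    (hstar : IsLeast {r : ℝ | ∃ S : Finset V, S.Nonempty ∧
      r = alphaR G (fun v => (w v : ℝ)) S} astar)
    (eps : ℝ) (heps : 0 < eps)
    (heps' : eps ≤ 1 / (wsum (fun v => (w v : ℝ)) univ) ^ 3)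
    (Bhat : Finset V) (hne : Bhat.Nonempty)
    (hmin : ∀ B : Finset V, B.Nonempty →
      capEps G (fun v => (w v : ℝ)) astar eps Bhat ≤
        capEps G (fun v => (w v : ℝ)) astar eps B) :
    IsMaxBottleneck G (fun v => (w v : ℝ)) Bhat := by
  obtain ⟨⟨S₀, hS₀, rfl⟩, hleast⟩ := hstar
  set ŵ : V → ℝ := fun v => (w v : ℝ)
  have hpos : ∀ {S : Finset V}, S.Nonempty → 0 < wsum ŵ S :=
    wsum_pos fun v => Nat.cast_pos.2 (hw v)
  have hnW : (Fintype.card V : ℝ) ≤ wsum ŵ univ := by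
    simpa using card_le_wsum (fun v => Nat.one_le_cast.2 (hw v)) univ
  have hW1 : (1 : ℝ) ≤ wsum ŵ univ :=
    le_trans (by exact_mod_cast Fintype.card_pos_iff.2 ⟨hS₀.choose⟩) hnW
  have hbot : surplus G ŵ (alphaR G ŵ S₀) Bhat = 0 := by
    by_contra hne'
    have hlt : 0 < surplus G ŵ (alphaR G ŵ S₀) Bhat :=
      ((surplus_nonneg_iff (hpos hne)).2 (hleast ⟨Bhat, hne, rfl⟩)).lt_of_ne' hne'
    have hgap := one_div_wsum_univ_le_surplus hw hS₀ hlt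
    have hsmall := sub_one_mul_lt_one_div hW1 hnW heps heps'
    exact (capEps_lt_of_surplus_eq_zero_of_le_surplus hS₀
      ((surplus_eq_zero_iff (hpos hS₀)).2 rfl) hgap heps.le hsmall).not_ge (hmin S₀ hS₀)
  have halpha := (surplus_eq_zero_iff (hpos hne)).1 hbot
  refine ⟨hne, fun S hS => halpha ▸ hleast ⟨S, hS, rfl⟩, fun B' hsub => ?_⟩
  by_contra! hle
  have hB' : B'.Nonempty := hne.mono hsub.subset
  have hbot' := (surplus_eq_zero_iff (hpos hB')).2
    (le_antisymm (halpha ▸ hle) (hleast ⟨B', hB', rfl⟩))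
  exact (capEps_lt_of_ssubset heps hbot hbot' hsub).not_ge (hmin B' hB')

/-- for positive integer weights and `0 < ε ≤ 1/w(V)³`, every nonempty
`B̂ ⊆ V` minimizing `cap(B,ε)` over all nonempty `B ⊆ V` is the maximal bottleneck. -/
theorem small_eps_min_capEps_is_maximal_bottleneck {V : Type*} [Fintype V] [DecidableEq V]
    (G : SimpleGraph V) [DecidableRel G.Adj] (w : V → ℕ)
    (hw : ∀ v, 0 < w v) (hiso : ∀ v : V, ∃ u, G.Adj v u)
    (astar : ℝ)
    (hstar : IsLeast {r : ℝ | ∃ S : Finset V, S.Nonempty ∧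
      r = alphaR G (fun v => (w v : ℝ)) S} astar)
    (eps : ℝ) (heps : 0 < eps)
    (heps' : eps ≤ 1 / (wsum (fun v => (w v : ℝ)) univ) ^ 3)
    (Bhat : Finset V) (hne : Bhat.Nonempty)
    (hmin : ∀ B : Finset V, B.Nonempty →
      capEps G (fun v => (w v : ℝ)) astar eps Bhat ≤
        capEps G (fun v => (w v : ℝ)) astar eps B) :
    IsMaxBottleneck G (fun v => (w v : ℝ)) Bhat :=
  small_eps_min_capEps_is_maximal_bottleneck_general G w hw astar hstar eps heps heps' Bhat hne hmin
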